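/- arXiv:2408.01545 — 3 statements merged into one kernel-verified Lean document; each statement's English description precedes it below -/
import Mathlib

section
/- If U is a unitary on a bipartite Hilbert space H_L ⊗ H_R such that for all operators A on H_L and B on H_R the commutator [I⊗B, U(A⊗I)U†] vanishes, then U is a product unitary, i.e., U = U_L ⊗ U_R for some unitaries U_L on H_L and U_R on H_R. -/
open Matrix Kronecker


lemma kron_conjT {m k : ℕ} (A : Matrix (Fin m) (Fin m) ℂ) (B : Matrix (Fin k) (Fin k) ℂ) :
    (A ⊗ₖ B)ᴴ = Aᴴ ⊗ₖ Bᴴ := by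
  ext ⟨i, s⟩ ⟨j, t⟩
  simp [conjTranspose_apply, kroneckerMap_apply, mul_comm]


lemma kron1_mul {m k : ℕ} (A B : Matrix (Fin m) (Fin m) ℂ) :
    (A ⊗ₖ (1 : Matrix (Fin k) (Fin k) ℂ)) * (B ⊗ₖ (1 : Matrix (Fin k) (Fin k) ℂ)) = (A * B) ⊗ₖ (1 : Matrix (Fin k) (Fin k) ℂ) := by
  have h := mul_kronecker_mul A B (1 : Matrix (Fin k) (Fin k) ℂ) (1 : Matrix (Fin k) (Fin k) ℂ)
  rw [Matrix.one_mul] at h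
  exact h.symm

lemma one_kron_mul {m k : ℕ} (A B : Matrix (Fin k) (Fin k) ℂ) :
    ((1 : Matrix (Fin m) (Fin m) ℂ) ⊗ₖ A) * ((1 : Matrix (Fin m) (Fin m) ℂ) ⊗ₖ B) = (1 : Matrix (Fin m) (Fin m) ℂ) ⊗ₖ (A * B) := by
  have h := mul_kronecker_mul (1 : Matrix (Fin m) (Fin m) ℂ) (1 : Matrix (Fin m) (Fin m) ℂ) A B
  rw [Matrix.one_mul] at h
  exact h.symm

lemma kron_one_inj {m k : ℕ} (s0 : Fin k) {Y Z : Matrix (Fin m) (Fin m) ℂ}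
    (hYZ : Y ⊗ₖ (1 : Matrix (Fin k) (Fin k) ℂ) = Z ⊗ₖ (1 : Matrix (Fin k) (Fin k) ℂ)) :
    Y = Z := by
  ext i j
  have := congrFun (congrFun hYZ (i, s0)) (j, s0)
  simpa [kroneckerMap_apply] using this

lemma one_kron_inj {m k : ℕ} (i0 : Fin m) {Y Z : Matrix (Fin k) (Fin k) ℂ}
    (hYZ : (1 : Matrix (Fin m) (Fin m) ℂ) ⊗ₖ Y = (1 : Matrix (Fin m) (Fin m) ℂ) ⊗ₖ Z) :
    Y = Z := by
  ext s t
  have := congrFun (congrFun hYZ (i0, s)) (i0, t)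
  simpa [kroneckerMap_apply] using this

lemma right_commutant {m k : ℕ} (s0 : Fin k)
    (X : Matrix (Fin m × Fin k) (Fin m × Fin k) ℂ)
    (hX : ∀ B : Matrix (Fin k) (Fin k) ℂ,
      ((1 : Matrix (Fin m) (Fin m) ℂ) ⊗ₖ B) * X = X * ((1 : Matrix (Fin m) (Fin m) ℂ) ⊗ₖ B)) :
    X = (Matrix.of fun i j => X (i, s0) (j, s0)) ⊗ₖ (1 : Matrix (Fin k) (Fin k) ℂ) := by
  have key : ∀ (a b : Fin k) (i : Fin m) (s : Fin k) (j : Fin m) (t : Fin k),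
      (if a = s then X (i, b) (j, t) else 0) = (if b = t then X (i, s) (j, a) else 0) := by
    intro a b i s j t
    have := congrFun (congrFun (hX (Matrix.single a b 1)) (i, s)) (j, t)
    rw [mul_apply, mul_apply] at this
    simp only [Fintype.sum_prod_type, kroneckerMap_apply, one_apply, Matrix.single,
      Matrix.of_apply, ite_mul, mul_ite, one_mul, mul_one, zero_mul, mul_zero, ite_and] at this
    simpa [Finset.sum_ite_eq, Finset.sum_ite_eq'] using this
  ext ⟨i, s⟩ ⟨j, t⟩
  simp only [kroneckerMap_apply, Matrix.of_apply, one_apply]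
  by_cases hst : s = t
  · subst hst
    have := key s s0 i s j s0
    simpa using this.symm
  · have := key t s0 i s j s0
    rw [if_neg (fun hh => hst hh.symm)] at this
    simp only [if_pos rfl, if_true, eq_self_iff_true] at this
    simp [hst, ← this]

lemma left_commutant {m k : ℕ} (i0 : Fin m)
    (X : Matrix (Fin m × Fin k) (Fin m × Fin k) ℂ)
    (hX : ∀ A : Matrix (Fin m) (Fin m) ℂ,
      (A ⊗ₖ (1 : Matrix (Fin k) (Fin k) ℂ)) * X = X * (A ⊗ₖ (1 : Matrix (Fin k) (Fin k) ℂ))) :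
    X = (1 : Matrix (Fin m) (Fin m) ℂ) ⊗ₖ (Matrix.of fun s t => X (i0, s) (i0, t)) := by
  have key : ∀ (a b : Fin m) (i : Fin m) (s : Fin k) (j : Fin m) (t : Fin k),
      (if a = i then X (b, s) (j, t) else 0) = (if b = j then X (i, s) (a, t) else 0) := by
    intro a b i s j t
    have := congrFun (congrFun (hX (Matrix.single a b 1)) (i, s)) (j, t)
    rw [mul_apply, mul_apply] at this
    simp only [Fintype.sum_prod_type, kroneckerMap_apply, one_apply, Matrix.single,
      Matrix.of_apply, ite_mul, mul_ite, one_mul, mul_one, zero_mul, mul_zero, ite_and] at this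
    simpa [Finset.sum_ite_eq, Finset.sum_ite_eq'] using this
  ext ⟨i, s⟩ ⟨j, t⟩
  simp only [kroneckerMap_apply, Matrix.of_apply, one_apply]
  by_cases hij : i = j
  · subst hij
    have := key i i0 i s i0 t
    simpa using this.symm
  · have := key j i0 i s i0 t
    rw [if_neg (fun hh => hij hh.symm)] at this
    simp only [if_pos rfl, if_true, eq_self_iff_true] at this
    simp [hij, ← this]



lemma commute_all_scalar {m : ℕ} (i0 : Fin m) (M : Matrix (Fin m) (Fin m) ℂ)
    (hM : ∀ A : Matrix (Fin m) (Fin m) ℂ, M * A = A * M) : M = M i0 i0 • 1 := by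
  ext i j
  by_cases hij : i = j
  · subst hij
    have := congrFun (congrFun (hM (Matrix.single i0 i 1)) i0) i
    rw [Matrix.mul_single_apply_same, Matrix.single_mul_apply_same] at this
    simp only [mul_one, one_mul] at this
    simp [this]
  · have := congrFun (congrFun (hM (Matrix.single j j 1)) i) j
    rw [Matrix.mul_single_apply_same] at this
    rw [Matrix.single_mul_apply_of_ne _ _ _ _ _ hij] at this
    simp only [mul_one] at this
    simp [hij, this]

/-- The map `A ↦` the `H_L`-part of `U (A ⊗ 1) Uᴴ`, as a linear map. -/
noncomputable def phiL {m k : ℕ} (U : Matrix (Fin m × Fin k) (Fin m × Fin k) ℂ) (s0 : Fin k) :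
    Matrix (Fin m) (Fin m) ℂ →ₗ[ℂ] Matrix (Fin m) (Fin m) ℂ where
  toFun A := Matrix.of fun i j =>
    (U * (A ⊗ₖ (1 : Matrix (Fin k) (Fin k) ℂ)) * Uᴴ) (i, s0) (j, s0)
  map_add' A B := by
    ext i j
    simp [add_kronecker, Matrix.mul_add, Matrix.add_mul]
  map_smul' c A := by
    ext i j
    simp [smul_kronecker, Matrix.mul_smul, Matrix.smul_mul]

lemma stdBasis_decomp {m : ℕ} (A : Matrix (Fin m) (Fin m) ℂ) (l i0 : Fin m) :
    A * Matrix.single l i0 1 = ∑ a : Fin m, A a l • Matrix.single a i0 1 := by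
  ext r s
  rw [Matrix.sum_apply]
  simp only [Matrix.smul_apply, Matrix.single, Matrix.of_apply, mul_apply, smul_eq_mul,
    mul_ite, mul_one, mul_zero, ite_and]
  by_cases hs : i0 = s
  · subst hs
    simp [Finset.sum_ite_eq, Finset.sum_ite_eq']
  · simp [hs]


/-- If `U` is a unitary on `H_L ⊗ H_R` such that `U (A ⊗ 1) U†` commutes with `1 ⊗ B`
for all operators `A` on `H_L` and `B` on `H_R`, then `U` is a product unitary:
`U = U_L ⊗ U_R` for unitaries `U_L`, `U_R`. -/
theorem zero_wall_is_product_unitary (m k : ℕ)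
    (U : Matrix (Fin m × Fin k) (Fin m × Fin k) ℂ)
    (hU : U ∈ Matrix.unitaryGroup (Fin m × Fin k) ℂ)
    (h : ∀ (A : Matrix (Fin m) (Fin m) ℂ) (B : Matrix (Fin k) (Fin k) ℂ),
      Commute ((1 : Matrix (Fin m) (Fin m) ℂ) ⊗ₖ B) (U * (A ⊗ₖ (1 : Matrix (Fin k) (Fin k) ℂ)) * Uᴴ)) :
    ∃ (UL : Matrix (Fin m) (Fin m) ℂ) (UR : Matrix (Fin k) (Fin k) ℂ),
      UL ∈ Matrix.unitaryGroup (Fin m) ℂ ∧ UR ∈ Matrix.unitaryGroup (Fin k) ℂ ∧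
      U = UL ⊗ₖ UR := by
  rcases Nat.eq_zero_or_pos m with hm | hm
  · subst hm
    refine ⟨1, 1, Submonoid.one_mem _, Submonoid.one_mem _, ?_⟩
    ext ⟨i, s⟩
    exact i.elim0
  rcases Nat.eq_zero_or_pos k with hk | hk
  · subst hk
    refine ⟨1, 1, Submonoid.one_mem _, Submonoid.one_mem _, ?_⟩
    ext ⟨i, s⟩
    exact s.elim0
  set i0 : Fin m := ⟨0, hm⟩ with hi0
  set s0 : Fin k := ⟨0, hk⟩ with hs0
  have hU1 : Uᴴ * U = 1 := by
    simpa [Matrix.star_eq_conjTranspose] using hU.1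
  have hU2 : U * Uᴴ = 1 := by
    simpa [Matrix.star_eq_conjTranspose] using hU.2
  have hP : ∀ A, U * (A ⊗ₖ (1 : Matrix (Fin k) (Fin k) ℂ)) * Uᴴ = (phiL U s0 A) ⊗ₖ 1 :=
    fun A => right_commutant s0 _ (fun B => (h A B).eq)
  have hsandwich : ∀ X Y : Matrix (Fin m × Fin k) (Fin m × Fin k) ℂ,
      (U * X * Uᴴ) * (U * Y * Uᴴ) = U * (X * Y) * Uᴴ := by
    intro X Y
    simp only [Matrix.mul_assoc]
    rw [← Matrix.mul_assoc Uᴴ U (Y * Uᴴ), hU1, Matrix.one_mul]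
  have phi_mul : ∀ A B, phiL U s0 (A * B) = phiL U s0 A * phiL U s0 B := by
    intro A B
    apply kron_one_inj s0
    rw [← hP]
    calc U * ((A * B) ⊗ₖ (1 : Matrix (Fin k) (Fin k) ℂ)) * Uᴴ
        = U * ((A ⊗ₖ (1 : Matrix (Fin k) (Fin k) ℂ)) * (B ⊗ₖ 1)) * Uᴴ := by
          rw [kron1_mul]
      _ = (U * (A ⊗ₖ 1) * Uᴴ) * (U * (B ⊗ₖ 1) * Uᴴ) := (hsandwich _ _).symm
      _ = ((phiL U s0 A) ⊗ₖ 1) * ((phiL U s0 B) ⊗ₖ 1) := by rw [hP, hP]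
      _ = (phiL U s0 A * phiL U s0 B) ⊗ₖ 1 := kron1_mul _ _
  have phi_star : ∀ A, phiL U s0 Aᴴ = (phiL U s0 A)ᴴ := by
    intro A
    apply kron_one_inj s0
    have h1 : (phiL U s0 A)ᴴ ⊗ₖ (1 : Matrix (Fin k) (Fin k) ℂ)
        = ((phiL U s0 A) ⊗ₖ (1 : Matrix (Fin k) (Fin k) ℂ))ᴴ := by
      rw [kron_conjT, conjTranspose_one]
    rw [h1, ← hP, ← hP]
    simp [conjTranspose_mul, kron_conjT, Matrix.mul_assoc]
  -- the nonzero idempotent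
  have hEE : Matrix.single i0 i0 (1:ℂ) * Matrix.single i0 i0 1 = Matrix.single i0 i0 1 := by
    rw [Matrix.single_mul_single_same, mul_one]
  have hconj : ∀ X : Matrix (Fin m × Fin k) (Fin m × Fin k) ℂ,
      Uᴴ * (U * X * Uᴴ) * U = X := by
    intro X
    calc Uᴴ * (U * X * Uᴴ) * U = (Uᴴ * U) * X * (Uᴴ * U) := by simp only [Matrix.mul_assoc]
      _ = X := by rw [hU1, Matrix.one_mul, Matrix.mul_one]
  have hphiE_ne : phiL U s0 (Matrix.single i0 i0 1) ≠ 0 := by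
    intro h0
    have h2 := hP (Matrix.single i0 i0 1)
    rw [h0] at h2
    have h3 : (Matrix.single i0 i0 (1:ℂ)) ⊗ₖ (1 : Matrix (Fin k) (Fin k) ℂ) = 0 := by
      rw [← hconj ((Matrix.single i0 i0 (1:ℂ)) ⊗ₖ (1 : Matrix (Fin k) (Fin k) ℂ)), h2,
        zero_kronecker, Matrix.mul_zero, Matrix.zero_mul]
    have h5 := congrFun (congrFun h3 (i0, s0)) (i0, s0)
    simp [kroneckerMap_apply, Matrix.single] at h5
  have hpq : ∃ p q, phiL U s0 (Matrix.single i0 i0 1) p q ≠ 0 := by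
    by_contra hc
    push_neg at hc
    exact hphiE_ne (by ext p q; simpa using hc p q)
  obtain ⟨p, q, hpq⟩ := hpq
  set V : Matrix (Fin m) (Fin m) ℂ :=
    Matrix.of fun i l => phiL U s0 (Matrix.single l i0 1) i q with hVdef
  have hVcol : ∀ i, V i i0 = phiL U s0 (Matrix.single i0 i0 1) i q := fun i => rfl
  have hVA : ∀ A, phiL U s0 A * V = V * A := by
    intro A
    ext i l
    rw [mul_apply, mul_apply]
    calc ∑ r, phiL U s0 A i r * V r l
        = (phiL U s0 A * phiL U s0 (Matrix.single l i0 1)) i q := by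
          rw [mul_apply]
          rfl
      _ = phiL U s0 (A * Matrix.single l i0 1) i q := by rw [phi_mul]
      _ = phiL U s0 (∑ a, A a l • Matrix.single a i0 1) i q := by rw [stdBasis_decomp]
      _ = ∑ a, A a l * phiL U s0 (Matrix.single a i0 1) i q := by
          rw [map_sum]
          simp only [_root_.map_smul, Matrix.sum_apply, Matrix.smul_apply, smul_eq_mul]
      _ = ∑ a, V i a * A a l := by
          simp only [hVdef, Matrix.of_apply]
          exact Finset.sum_congr rfl fun a _ => mul_comm _ _
  have hstar2 : ∀ A, Vᴴ * phiL U s0 A = A * Vᴴ := by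
    intro A
    have h1 := congrArg Matrix.conjTranspose (hVA Aᴴ)
    simp only [conjTranspose_mul, phi_star, conjTranspose_conjTranspose] at h1
    exact h1
  have hVcomm : ∀ A : Matrix (Fin m) (Fin m) ℂ, (Vᴴ * V) * A = A * (Vᴴ * V) := by
    intro A
    calc Vᴴ * V * A = Vᴴ * (phiL U s0 A * V) := by rw [Matrix.mul_assoc, hVA]
      _ = (Vᴴ * phiL U s0 A) * V := by rw [Matrix.mul_assoc]
      _ = (A * Vᴴ) * V := by rw [hstar2]
      _ = A * (Vᴴ * V) := by rw [Matrix.mul_assoc]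
  have hscal := commute_all_scalar i0 (Vᴴ * V) hVcomm
  set s : ℝ := ∑ r, Complex.normSq (V r i0) with hsdef
  have hcval : (Vᴴ * V) i0 i0 = (s : ℂ) := by
    rw [mul_apply, hsdef]
    push_cast
    simp only [conjTranspose_apply, Complex.normSq_eq_conj_mul_self]
    rfl
  have hspos : 0 < s := by
    have hple : Complex.normSq (V p i0) ≤ s :=
      Finset.single_le_sum (f := fun r => Complex.normSq (V r i0))
        (fun r _ => Complex.normSq_nonneg _) (Finset.mem_univ p)
    have hgt : 0 < Complex.normSq (V p i0) := by
      rw [Complex.normSq_pos]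
      simpa [hVcol] using hpq
    linarith
  have hVV : Vᴴ * V = (s : ℂ) • 1 := by rw [hscal, hcval]
  set UL : Matrix (Fin m) (Fin m) ℂ := (((Real.sqrt s)⁻¹ : ℝ) : ℂ) • V with hULdef
  have hULunit : ULᴴ * UL = 1 := by
    rw [hULdef, conjTranspose_smul, Matrix.smul_mul, Matrix.mul_smul, hVV]
    rw [smul_smul, smul_smul]
    have hs2 : ((Real.sqrt s)⁻¹ * (Real.sqrt s)⁻¹ * s : ℝ) = 1 := by
      rw [← mul_inv, Real.mul_self_sqrt hspos.le, inv_mul_cancel₀ (ne_of_gt hspos)]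
    have hone : ((((Real.sqrt s)⁻¹ : ℝ) : ℂ)) * ((((Real.sqrt s)⁻¹ : ℝ) : ℂ)) * ((s : ℝ) : ℂ)
        = 1 := by
      rw [← Complex.ofReal_mul, ← Complex.ofReal_mul, hs2, Complex.ofReal_one]
    rw [Complex.star_def, Complex.conj_ofReal, hone, one_smul]
  have hULmem : UL ∈ Matrix.unitaryGroup (Fin m) ℂ := by
    rw [Matrix.mem_unitaryGroup_iff']
    simpa [Matrix.star_eq_conjTranspose] using hULunit
  have hUL2 : UL * ULᴴ = 1 := by
    have := Matrix.mem_unitaryGroup_iff.mp hULmem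
    simpa [Matrix.star_eq_conjTranspose] using this
  have hULA : ∀ A, phiL U s0 A * UL = UL * A := by
    intro A
    rw [hULdef, Matrix.mul_smul, Matrix.smul_mul, hVA]
  have hphiA : ∀ A, phiL U s0 A = UL * A * ULᴴ := by
    intro A
    have h1 := congrArg (fun M => M * ULᴴ) (hULA A)
    beta_reduce at h1
    rwa [Matrix.mul_assoc (phiL U s0 A), hUL2, Matrix.mul_one] at h1
  set W : Matrix (Fin m × Fin k) (Fin m × Fin k) ℂ := (ULᴴ ⊗ₖ 1) * U with hWdef
  have hWcomm : ∀ A : Matrix (Fin m) (Fin m) ℂ,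
      (A ⊗ₖ (1 : Matrix (Fin k) (Fin k) ℂ)) * W = W * (A ⊗ₖ 1) := by
    intro A
    have h1 : U * (A ⊗ₖ (1 : Matrix (Fin k) (Fin k) ℂ)) = ((UL * A * ULᴴ) ⊗ₖ 1) * U := by
      have h2 := hP A
      rw [hphiA A] at h2
      calc U * (A ⊗ₖ (1 : Matrix (Fin k) (Fin k) ℂ))
          = U * (A ⊗ₖ 1) * (Uᴴ * U) := by rw [hU1, Matrix.mul_one]
        _ = (U * (A ⊗ₖ 1) * Uᴴ) * U := by rw [Matrix.mul_assoc, Matrix.mul_assoc, Matrix.mul_assoc]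
        _ = ((UL * A * ULᴴ) ⊗ₖ 1) * U := by rw [h2]
    have hswap : (A ⊗ₖ (1 : Matrix (Fin k) (Fin k) ℂ)) * (ULᴴ ⊗ₖ 1)
        = (ULᴴ ⊗ₖ (1 : Matrix (Fin k) (Fin k) ℂ)) * ((UL * A * ULᴴ) ⊗ₖ 1) := by
      rw [kron1_mul, kron1_mul, ← Matrix.mul_assoc, ← Matrix.mul_assoc, hULunit,
        Matrix.one_mul]
    rw [hWdef, Matrix.mul_assoc, h1, ← Matrix.mul_assoc, ← Matrix.mul_assoc, hswap]
  have hWform := left_commutant i0 W hWcomm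
  set UR : Matrix (Fin k) (Fin k) ℂ := Matrix.of fun a b => W (i0, a) (i0, b) with hURdef
  have hUfact : U = (UL ⊗ₖ (1 : Matrix (Fin k) (Fin k) ℂ)) * W := by
    rw [hWdef, ← Matrix.mul_assoc, kron1_mul, hUL2, one_kronecker_one, Matrix.one_mul]
  have hWunit : Wᴴ * W = 1 := by
    rw [hWdef, conjTranspose_mul, kron_conjT, conjTranspose_conjTranspose, conjTranspose_one]
    rw [Matrix.mul_assoc, ← Matrix.mul_assoc (UL ⊗ₖ (1 : Matrix (Fin k) (Fin k) ℂ)),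
      kron1_mul, hUL2, one_kronecker_one, Matrix.one_mul, hU1]
  have hURunit : URᴴ * UR = 1 := by
    apply one_kron_inj i0
    calc (1 : Matrix (Fin m) (Fin m) ℂ) ⊗ₖ (URᴴ * UR)
        = ((1 : Matrix (Fin m) (Fin m) ℂ) ⊗ₖ URᴴ) * (1 ⊗ₖ UR) := (one_kron_mul _ _).symm
      _ = Wᴴ * W := by rw [hWform, kron_conjT, conjTranspose_one]
      _ = 1 := hWunit
      _ = (1 : Matrix (Fin m) (Fin m) ℂ) ⊗ₖ 1 := one_kronecker_one.symm
  have hURmem : UR ∈ Matrix.unitaryGroup (Fin k) ℂ := by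
    rw [Matrix.mem_unitaryGroup_iff']
    simpa [Matrix.star_eq_conjTranspose] using hURunit
  refine ⟨UL, UR, hULmem, hURmem, ?_⟩
  rw [hUfact, hWform]
  have h6 := mul_kronecker_mul UL (1 : Matrix (Fin m) (Fin m) ℂ) (1 : Matrix (Fin k) (Fin k) ℂ) UR
  rw [Matrix.mul_one, Matrix.one_mul] at h6
  exact h6.symm
end

section
/- Two-sidedness of Clifford walls: let W be a symplectic matrix over Z/2Z acting on V = V_L ⊕ V_C ⊕ V_R (a direct sum of symplectic subspaces) such that W has finite order and, for all t ≥ 0 and all l ∈ V_L, the projection of W^t(l ⊕ 0 ⊕ 0) onto V_R is zero. Then for all t ≥ 0 and all r ∈ V_R, the projection of W^t(0 ⊕ 0 ⊕ r) onto V_L is zero. -/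
/-- Two-sidedness of Clifford walls.  Let `V = V_L ⊕ V_C ⊕ V_R` be an orthogonal direct
sum of symplectic `GF(2)`-spaces (each carrying a nondegenerate alternating bilinear
form), and let `W` be a finite-order linear map preserving the total form `J`.  If
vectors starting in `V_L` never acquire a `V_R`-component under iteration of `W`, then
vectors starting in `V_R` never acquire a `V_L`-component. -/
theorem clifford_wall_two_sided (a b c : ℕ)
    (JL : LinearMap.BilinForm (ZMod 2) (Fin a → ZMod 2))
    (JC : LinearMap.BilinForm (ZMod 2) (Fin b → ZMod 2))
    (JR : LinearMap.BilinForm (ZMod 2) (Fin c → ZMod 2))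
    (hJLalt : ∀ x, JL x x = 0) (hJCalt : ∀ x, JC x x = 0) (hJRalt : ∀ x, JR x x = 0)
    (hJLnd : JL.Nondegenerate) (hJCnd : JC.Nondegenerate) (hJRnd : JR.Nondegenerate)
    (W : Module.End (ZMod 2)
      ((Fin a → ZMod 2) × (Fin b → ZMod 2) × (Fin c → ZMod 2)))
    (hWsymp : ∀ u v, JL (W u).1 (W v).1 + JC (W u).2.1 (W v).2.1 + JR (W u).2.2 (W v).2.2
      = JL u.1 v.1 + JC u.2.1 v.2.1 + JR u.2.2 v.2.2)
    (hWord : ∃ τ > 0, W ^ τ = 1)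
    (hleft : ∀ (t : ℕ) (l : Fin a → ZMod 2), ((W ^ t) (l, 0, 0)).2.2 = 0) :
    ∀ (t : ℕ) (r : Fin c → ZMod 2), ((W ^ t) (0, 0, r)).1 = 0 := by
  obtain ⟨τ, hτpos, hWτ⟩ := hWord
  have hiter : ∀ (n : ℕ) u v,
      JL ((W ^ n) u).1 ((W ^ n) v).1 + JC ((W ^ n) u).2.1 ((W ^ n) v).2.1
        + JR ((W ^ n) u).2.2 ((W ^ n) v).2.2
      = JL u.1 v.1 + JC u.2.1 v.2.1 + JR u.2.2 v.2.2 := by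
    intro n
    induction n with
    | zero => intro u v; simp
    | succ n ih =>
      intro u v
      simp only [pow_succ, Module.End.mul_apply]
      rw [ih (W u) (W v), hWsymp]
  intro t r
  apply hJLnd.1
  intro l
  have hts : t ≤ t * τ := Nat.le_mul_of_pos_right t hτpos
  set s := t * τ - t with hs
  have hpow : (W ^ t) * (W ^ s) = 1 := by
    rw [← pow_add]
    have hadd : t + s = t * τ := by omega
    rw [hadd, mul_comm, pow_mul, hWτ, one_pow]
  have hv : (W ^ t) ((W ^ s) (l, 0, 0)) = (l, 0, 0) := by
    have := congrArg (fun f : Module.End (ZMod 2) _ => f (l, 0, 0)) hpow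
    simpa [Module.End.mul_apply] using this
  have key := hiter t (0, 0, r) ((W ^ s) (l, 0, 0))
  rw [hv] at key
  have hR : ((W ^ s) (l, 0, 0)).2.2 = 0 := hleft s l
  rw [hR] at key
  simpa using key
end

section
/- Internal orthogonality of walls: with V = V_L ⊕ V_C ⊕ V_R and a finite-order symplectic W over GF(2) satisfying the left wall condition, define G_left ⊆ V_C as the set of V_C-components of all vectors Σ_t W^t(u(t) ⊕ 0 ⊕ 0) over left input signals u, and define G_right analogously from right signals. Then G_left and G_right are J-orthogonal: g J g' = 0 for all g ∈ G_left, g' ∈ G_right. -/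
/-- Internal orthogonality of walls.  With `V = V_L ⊕ V_C ⊕ V_R` an orthogonal direct
sum of symplectic `GF(2)`-spaces and `W` a finite-order form-preserving linear map
satisfying the left wall condition, the sets `G_left`/`G_right` of `V_C`-components of
states generated by left/right input signals are `J`-orthogonal: `J(g, g') = 0` for
every `g ∈ G_left` and `g' ∈ G_right`. -/
theorem wall_internal_orthogonality (a b c : ℕ)
    (JL : LinearMap.BilinForm (ZMod 2) (Fin a → ZMod 2))
    (JC : LinearMap.BilinForm (ZMod 2) (Fin b → ZMod 2))
    (JR : LinearMap.BilinForm (ZMod 2) (Fin c → ZMod 2))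
    (hJLalt : ∀ x, JL x x = 0) (hJCalt : ∀ x, JC x x = 0) (hJRalt : ∀ x, JR x x = 0)
    (hJLnd : JL.Nondegenerate) (hJCnd : JC.Nondegenerate) (hJRnd : JR.Nondegenerate)
    (W : Module.End (ZMod 2)
      ((Fin a → ZMod 2) × (Fin b → ZMod 2) × (Fin c → ZMod 2)))
    (hWsymp : ∀ u v, JL (W u).1 (W v).1 + JC (W u).2.1 (W v).2.1 + JR (W u).2.2 (W v).2.2
      = JL u.1 v.1 + JC u.2.1 v.2.1 + JR u.2.2 v.2.2)
    (hWord : ∃ τ > 0, W ^ τ = 1)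
    (hleft : ∀ (t : ℕ) (l : Fin a → ZMod 2), ((W ^ t) (l, 0, 0)).2.2 = 0) :
    ∀ g g' : Fin b → ZMod 2,
      (∃ (u : ℕ → (Fin a → ZMod 2)) (T : ℕ),
        (∑ t ∈ Finset.range (T + 1), (W ^ (T - t)) (u t, 0, 0)).2.1 = g) →
      (∃ (u : ℕ → (Fin c → ZMod 2)) (T : ℕ),
        (∑ t ∈ Finset.range (T + 1), (W ^ (T - t)) (0, 0, u t)).2.1 = g') →
      JC g g' = 0 := by
  obtain ⟨τ, hτpos, hτ⟩ := hWord
  set J : ((Fin a → ZMod 2) × (Fin b → ZMod 2) × (Fin c → ZMod 2)) →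
      ((Fin a → ZMod 2) × (Fin b → ZMod 2) × (Fin c → ZMod 2)) → ZMod 2 :=
    fun u v => JL u.1 v.1 + JC u.2.1 v.2.1 + JR u.2.2 v.2.2 with hJ
  -- a normalized form of the left wall condition
  have hleft0 : ∀ (t : ℕ) (l : Fin a → ZMod 2), ((W ^ t) (l, 0)).2.2 = 0 :=
    fun t l => hleft t l
  -- invariance of J under powers of W
  have hpow : ∀ (n : ℕ) u v, J ((W ^ n) u) ((W ^ n) v) = J u v := by
    intro n
    induction n with
    | zero => intro u v; simp
    | succ n ih =>
      intro u v
      have h1 : (W ^ (n + 1)) u = (W ^ n) (W u) := by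
        rw [pow_succ, Module.End.mul_apply]
      have h2 : (W ^ (n + 1)) v = (W ^ n) (W v) := by
        rw [pow_succ, Module.End.mul_apply]
      rw [h1, h2, ih (W u) (W v)]
      exact hWsymp u v
  -- symmetry of JL from alternation in characteristic two
  have hJLsymm : ∀ x y, JL x y = JL y x := by
    intro x y
    have h := hJLalt (x + y)
    simp only [map_add, LinearMap.add_apply, hJLalt] at h
    have h2 : JL x y + JL y x = 0 := by linear_combination h
    have := eq_neg_of_add_eq_zero_left h2
    simpa [CharTwo.neg_eq] using this
  -- right wall condition
  have hright : ∀ (t : ℕ) (r : Fin c → ZMod 2), ((W ^ t) (0, 0, r)).1 = 0 := by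
    intro t r
    apply hJLnd.1
    intro l
    rw [hJLsymm]
    have hN : (W ^ (t * τ - t)) ((W ^ t) (0, 0, r)) = (0, 0, r) := by
      have h1 : (W ^ (t * τ - t)) ((W ^ t) (0, 0, r))
          = (W ^ (t * τ - t + t)) (0, 0, r) := by
        rw [pow_add, Module.End.mul_apply]
      rw [h1, Nat.sub_add_cancel (Nat.le_mul_of_pos_right t hτpos),
        pow_mul', hτ, one_pow]
      rfl
    have h := hpow (t * τ - t) (l, 0, 0) ((W ^ t) (0, 0, r))
    rw [hN] at h
    simp only [hJ] at h
    simpa [hleft0 (t * τ - t) l, hleft (t * τ - t) l] using h.symm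
  have hright0 : ∀ (t : ℕ) (r : Fin c → ZMod 2), ((W ^ t) (0, 0, r)).1 = 0 :=
    fun t r => hright t r
  -- pairwise orthogonality of evolved left and right insertions
  have hpair : ∀ (m n : ℕ) (l : Fin a → ZMod 2) (r : Fin c → ZMod 2),
      J ((W ^ m) (l, 0, 0)) ((W ^ n) (0, 0, r)) = 0 := by
    intro m n l r
    rcases le_total n m with h | h
    · have hm : (W ^ m) ((l, 0, 0) :
          (Fin a → ZMod 2) × (Fin b → ZMod 2) × (Fin c → ZMod 2))
          = (W ^ n) ((W ^ (m - n)) (l, 0, 0)) := by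
        rw [← Module.End.mul_apply, ← pow_add, Nat.add_sub_cancel' h]
      rw [hm, hpow]
      simp [hJ, hleft0 (m - n) l, hleft (m - n) l]
    · have hn : (W ^ n) ((0, 0, r) :
          (Fin a → ZMod 2) × (Fin b → ZMod 2) × (Fin c → ZMod 2))
          = (W ^ m) ((W ^ (n - m)) (0, 0, r)) := by
        rw [← Module.End.mul_apply, ← pow_add, Nat.add_sub_cancel' h]
      rw [hn, hpow]
      simp [hJ, hright0 (n - m) r]
  -- bilinearity of J over finite sums
  have hJsuml : ∀ (s : Finset ℕ)
      (f : ℕ → (Fin a → ZMod 2) × (Fin b → ZMod 2) × (Fin c → ZMod 2)) yy,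
      J (∑ i ∈ s, f i) yy = ∑ i ∈ s, J (f i) yy := by
    intro s f yy
    simp only [hJ, Prod.fst_sum, Prod.snd_sum, LinearMap.BilinForm.sum_left,
      ← Finset.sum_add_distrib]
  have hJsumr : ∀ (s : Finset ℕ)
      (f : ℕ → (Fin a → ZMod 2) × (Fin b → ZMod 2) × (Fin c → ZMod 2)) xx,
      J xx (∑ i ∈ s, f i) = ∑ i ∈ s, J xx (f i) := by
    intro s f xx
    simp only [hJ, Prod.fst_sum, Prod.snd_sum, LinearMap.BilinForm.sum_right,
      ← Finset.sum_add_distrib]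
  intro g g' hg hg'
  obtain ⟨u, T, hu⟩ := hg
  obtain ⟨v, T', hv⟩ := hg'
  set x := ∑ t ∈ Finset.range (T + 1), (W ^ (T - t)) (u t, 0, 0) with hx
  set y := ∑ t ∈ Finset.range (T' + 1), (W ^ (T' - t)) (0, 0, v t) with hy
  have hx22 : x.2.2 = 0 := by
    rw [hx, Prod.snd_sum, Prod.snd_sum]
    exact Finset.sum_eq_zero fun t _ => hleft (T - t) (u t)
  have hy1 : y.1 = 0 := by
    rw [hy, Prod.fst_sum]
    exact Finset.sum_eq_zero fun t _ => hright (T' - t) (v t)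
  have hJxy : J x y = 0 := by
    rw [hx, hJsuml]
    refine Finset.sum_eq_zero fun t _ => ?_
    rw [hy, hJsumr]
    exact Finset.sum_eq_zero fun s _ => hpair _ _ _ _
  have hfin : JC g g' = J x y := by
    rw [← hu, ← hv, hJ]
    simp [hx22, hy1]
  rw [hfin, hJxy]
end
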